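/- arXiv:2602.08375 — 4 statements merged into one kernel-verified Lean document; each statement's English description precedes it below -/
import Mathlib

section
/- For any real numbers a > 0, b, and β ≥ 1, there exists a constant C depending only on β such that | |a+b|^β (a+b) − a^{β+1} − (β+1) a^β b | ≤ C ( a^{β−1} b² + |b|^{β+1} ). -/
open Set

-- |x^β - y^β| ≤ β * M^(β-1) * |x - y| for x, y ∈ [0, M]
lemma aux_rpow_lip (β : ℝ) (hβ : 1 ≤ β) {M x y : ℝ} (hM : 0 ≤ M)
    (hx : x ∈ Icc (0:ℝ) M) (hy : y ∈ Icc (0:ℝ) M) :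
    |x ^ β - y ^ β| ≤ β * M ^ (β - 1) * |x - y| := by
  have hβ0 : 0 ≤ β - 1 := by linarith
  have hderiv : ∀ z ∈ Icc (0:ℝ) M,
      HasDerivWithinAt (fun t : ℝ => t ^ β) (β * z ^ (β - 1)) (Icc (0:ℝ) M) z := by
    intro z hz
    exact (Real.hasDerivAt_rpow_const (Or.inr hβ)).hasDerivWithinAt
  have hbound : ∀ z ∈ Icc (0:ℝ) M, ‖β * z ^ (β - 1)‖ ≤ β * M ^ (β - 1) := by
    intro z hz
    rw [Real.norm_eq_abs, abs_of_nonneg (mul_nonneg (by linarith) (Real.rpow_nonneg hz.1 _))]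
    exact mul_le_mul_of_nonneg_left (Real.rpow_le_rpow hz.1 hz.2 hβ0) (by linarith)
  have := (convex_Icc (0:ℝ) M).norm_image_sub_le_of_norm_hasDerivWithin_le
    hderiv hbound hy hx
  simpa [Real.norm_eq_abs] using this

theorem stmt_2 (β : ℝ) (hβ : 1 ≤ β) :
    ∃ C : ℝ, 0 < C ∧ ∀ a b : ℝ, 0 < a →
      |(|a + b|) ^ β * (a + b) - a ^ (β + 1) - (β + 1) * a ^ β * b| ≤
        C * (a ^ (β - 1) * b ^ 2 + |b| ^ (β + 1)) := by
  have hβ1 : (0:ℝ) < β + 1 := by linarith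
  refine ⟨3 ^ (β + 1) + 2 ^ (β + 1) + (β + 1) * 2 ^ β + (β + 1) * β * (3/2) ^ (β - 1),
    by positivity, ?_⟩
  intro a b ha
  set C1 : ℝ := 3 ^ (β + 1) + 2 ^ (β + 1) + (β + 1) * 2 ^ β with hC1
  set C2 : ℝ := (β + 1) * β * (3/2) ^ (β - 1) with hC2
  have hC1pos : 0 < C1 := by positivity
  have hC2pos : 0 < C2 := by positivity
  have hterm1 : 0 ≤ a ^ (β - 1) * b ^ 2 := by positivity
  have hterm2 : 0 ≤ |b| ^ (β + 1) := by positivity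
  by_cases hb : |b| ≤ a / 2
  -- near case: |b| ≤ a/2
  · have hab : a / 2 ≤ a + b := by
      have := abs_le.mp hb
      linarith [this.1]
    have habpos : 0 < a + b := by linarith
    have hxle : a + b ≤ 3 / 2 * a := by
      have := abs_le.mp hb; linarith [this.2]
    have habs : |a + b| = a + b := abs_of_pos habpos
    have hrw : (|a + b|) ^ β * (a + b) = (a + b) ^ (β + 1) := by
      rw [habs, ← Real.rpow_add_one habpos.ne']
    rw [hrw]
    -- Taylor via MVT on f x = x^(β+1) - (β+1)*a^β*x over Icc (a-|b|) (a+|b|)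
    set s : Set ℝ := Icc (a - |b|) (a + |b|) with hs
    have hs0 : ∀ x ∈ s, 0 ≤ x ∧ x ≤ 3 / 2 * a := by
      intro x hx
      constructor
      · have : a / 2 ≤ a - |b| := by linarith
        linarith [hx.1]
      · linarith [hx.2, hb]
    have hderiv : ∀ x ∈ s, HasDerivWithinAt
        (fun t : ℝ => t ^ (β + 1) - (β + 1) * a ^ β * t)
        ((β + 1) * x ^ β - (β + 1) * a ^ β) s x := by
      intro x hx
      have h1 : HasDerivAt (fun t : ℝ => t ^ (β + 1)) ((β + 1) * x ^ β) x := by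
        have := Real.hasDerivAt_rpow_const (p := β + 1) (x := x) (Or.inr (by linarith))
        simpa using this
      have h2 : HasDerivAt (fun t : ℝ => (β + 1) * a ^ β * t)
          ((β + 1) * a ^ β) x := by
        simpa using (hasDerivAt_id x).const_mul ((β + 1) * a ^ β)
      exact (h1.sub h2).hasDerivWithinAt
    have hbound : ∀ x ∈ s, ‖(β + 1) * x ^ β - (β + 1) * a ^ β‖ ≤
        (β + 1) * (β * (3 / 2 * a) ^ (β - 1) * |b|) := by
      intro x hx
      obtain ⟨hx0, hx32⟩ := hs0 x hx
      have hM : (0:ℝ) ≤ 3 / 2 * a := by linarith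
      have hxmem : x ∈ Icc (0:ℝ) (3 / 2 * a) := ⟨hx0, hx32⟩
      have hamem : a ∈ Icc (0:ℝ) (3 / 2 * a) := ⟨ha.le, by linarith⟩
      have key := aux_rpow_lip β hβ hM hxmem hamem
      have hxa : |x - a| ≤ |b| := by
        rcases abs_le.mp (le_refl |b|) with _
        have := hx.1; have := hx.2
        rw [abs_le]; constructor <;> [linarith; linarith]
      calc ‖(β + 1) * x ^ β - (β + 1) * a ^ β‖
          = (β + 1) * |x ^ β - a ^ β| := by
            rw [Real.norm_eq_abs, ← mul_sub, abs_mul, abs_of_pos hβ1]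
        _ ≤ (β + 1) * (β * (3 / 2 * a) ^ (β - 1) * |x - a|) := by
            exact mul_le_mul_of_nonneg_left key hβ1.le
        _ ≤ (β + 1) * (β * (3 / 2 * a) ^ (β - 1) * |b|) := by
            apply mul_le_mul_of_nonneg_left _ hβ1.le
            apply mul_le_mul_of_nonneg_left hxa (by positivity)
    have hmem1 : a + b ∈ s := by
      constructor
      · linarith [neg_abs_le b]
      · linarith [le_abs_self b]
    have hmem2 : a ∈ s := by
      constructor <;> simp [abs_nonneg b]
    have key := (convex_Icc (a - |b|) (a + |b|)).norm_image_sub_le_of_norm_hasDerivWithin_le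
      hderiv hbound hmem2 hmem1
    have heq : (a + b) ^ (β + 1) - (β + 1) * a ^ β * (a + b) -
        (a ^ (β + 1) - (β + 1) * a ^ β * a) =
        (a + b) ^ (β + 1) - a ^ (β + 1) - (β + 1) * a ^ β * b := by ring
    rw [Real.norm_eq_abs, Real.norm_eq_abs, heq, add_sub_cancel_left] at key
    have hfac : (3 / 2 * a) ^ (β - 1) = (3 / 2 : ℝ) ^ (β - 1) * a ^ (β - 1) :=
      Real.mul_rpow (by norm_num) ha.le
    have hsq : |b| * |b| = b ^ 2 := by rw [← abs_mul, ← sq, abs_sq]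
    calc |(a + b) ^ (β + 1) - a ^ (β + 1) - (β + 1) * a ^ β * b|
        ≤ (β + 1) * (β * (3 / 2 * a) ^ (β - 1) * |b|) * |b| := key
      _ = C2 * (a ^ (β - 1) * b ^ 2) := by
          rw [hfac, hC2, ← hsq]; ring
      _ ≤ (C1 + C2) * (a ^ (β - 1) * b ^ 2 + |b| ^ (β + 1)) := by
          nlinarith [mul_nonneg hC2pos.le hterm2, mul_nonneg hC1pos.le hterm1,
            mul_nonneg hC1pos.le hterm2]
  -- far case: a/2 < |b|
  · push_neg at hb
    have hbpos : 0 < |b| := lt_trans (by linarith) hb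
    have ha2b : a ≤ 2 * |b| := by linarith
    have hab3 : |a + b| ≤ 3 * |b| := by
      calc |a + b| ≤ |a| + |b| := abs_add_le a b
        _ = a + |b| := by rw [abs_of_pos ha]
        _ ≤ 3 * |b| := by linarith
    have hpow : ∀ c : ℝ, 0 < c → (c * |b|) ^ (β + 1) = c ^ (β + 1) * |b| ^ (β + 1) :=
      fun c hc => Real.mul_rpow hc.le (abs_nonneg b)
    have h1 : (|a + b|) ^ β * |a + b| ≤ 3 ^ (β + 1) * |b| ^ (β + 1) := by
      have e1 : (|a + b|) ^ β ≤ (3 * |b|) ^ β :=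
        Real.rpow_le_rpow (abs_nonneg _) hab3 (by linarith)
      have e2 : (3 * |b|) ^ β * (3 * |b|) = (3 * |b|) ^ (β + 1) := by
        rw [← Real.rpow_add_one (by positivity)]
      calc (|a + b|) ^ β * |a + b| ≤ (3 * |b|) ^ β * (3 * |b|) := by
            apply mul_le_mul e1 hab3 (abs_nonneg _) (by positivity)
        _ = 3 ^ (β + 1) * |b| ^ (β + 1) := by rw [e2, hpow 3 (by norm_num)]
    have h2 : a ^ (β + 1) ≤ 2 ^ (β + 1) * |b| ^ (β + 1) := by
      calc a ^ (β + 1) ≤ (2 * |b|) ^ (β + 1) :=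
            Real.rpow_le_rpow ha.le ha2b hβ1.le
        _ = 2 ^ (β + 1) * |b| ^ (β + 1) := hpow 2 (by norm_num)
    have h3 : (β + 1) * a ^ β * |b| ≤ (β + 1) * 2 ^ β * |b| ^ (β + 1) := by
      have e1 : a ^ β ≤ (2 * |b|) ^ β :=
        Real.rpow_le_rpow ha.le ha2b (by linarith)
      have e2 : (2 * |b|) ^ β = 2 ^ β * |b| ^ β := Real.mul_rpow (by norm_num) (abs_nonneg b)
      have e3 : |b| ^ β * |b| = |b| ^ (β + 1) := by
        rw [← Real.rpow_add_one hbpos.ne']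
      calc (β + 1) * a ^ β * |b| ≤ (β + 1) * (2 ^ β * |b| ^ β) * |b| := by
            rw [← e2]
            apply mul_le_mul_of_nonneg_right _ (abs_nonneg b)
            exact mul_le_mul_of_nonneg_left e1 hβ1.le
        _ = (β + 1) * 2 ^ β * |b| ^ (β + 1) := by rw [← e3]; ring
    have htri : |(|a + b|) ^ β * (a + b) - a ^ (β + 1) - (β + 1) * a ^ β * b| ≤
        (|a + b|) ^ β * |a + b| + a ^ (β + 1) + (β + 1) * a ^ β * |b| := by
      have t1 : |(|a + b|) ^ β * (a + b)| = (|a + b|) ^ β * |a + b| := by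
        rw [abs_mul, abs_of_nonneg (Real.rpow_nonneg (abs_nonneg _) β)]
      have t2 : |(β + 1) * a ^ β * b| = (β + 1) * a ^ β * |b| := by
        rw [abs_mul]
        congr 1
        rw [abs_of_nonneg (by positivity)]
      calc |(|a + b|) ^ β * (a + b) - a ^ (β + 1) - (β + 1) * a ^ β * b|
          ≤ |(|a + b|) ^ β * (a + b)| + |a ^ (β + 1)| + |(β + 1) * a ^ β * b| := by
            apply (abs_sub _ _).trans
            apply add_le_add_left
            exact abs_sub _ _
        _ = (|a + b|) ^ β * |a + b| + a ^ (β + 1) + (β + 1) * a ^ β * |b| := by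
            rw [t1, t2, abs_of_nonneg (Real.rpow_nonneg ha.le (β + 1))]
    calc |(|a + b|) ^ β * (a + b) - a ^ (β + 1) - (β + 1) * a ^ β * b|
        ≤ C1 * |b| ^ (β + 1) := by
          rw [hC1]; linarith
      _ ≤ (C1 + C2) * (a ^ (β - 1) * b ^ 2 + |b| ^ (β + 1)) := by
          nlinarith [mul_nonneg hC1pos.le hterm1, mul_nonneg hC2pos.le hterm1,
            mul_nonneg hC2pos.le hterm2]
end

section
/- For any real numbers a > 0, b, and 0 ≤ β < 1, there exists a constant C depending only on β such that | |a+b|^β (a+b) − a^{β+1} − (β+1) a^β b | ≤ C min{ a^{β−1} b², |b|^{β+1} }. -/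
open Real

theorem stmt_3 (β : ℝ) (hβ0 : 0 ≤ β) (hβ1 : β < 1) :
    ∃ C : ℝ, 0 < C ∧ ∀ a b : ℝ, 0 < a →
      |(|a + b|) ^ β * (a + b) - a ^ (β + 1) - (β + 1) * a ^ β * b| ≤
        C * min (a ^ (β - 1) * b ^ 2) (|b| ^ (β + 1)) := by
  refine ⟨7, by norm_num, fun a b ha => ?_⟩
  have hβ1' : (0:ℝ) < β + 1 := by linarith
  have ha1 : a ^ (β + 1) = a ^ β * a := by
    rw [rpow_add_one ha.ne']
  have ha2 : a ^ β = a ^ (β - 1) * a := by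
    rw [← rpow_add_one ha.ne']; ring_nf
  rcases eq_or_ne b 0 with rfl | hb0
  · have h1 : |a + 0| = a := by rw [add_zero, abs_of_pos ha]
    rw [h1]
    have : a ^ β * (a + 0) - a ^ (β + 1) - (β + 1) * a ^ β * 0 = 0 := by
      rw [ha1]; ring
    rw [this, abs_zero]
    have h0 : (0:ℝ) ^ (β + 1) = 0 := zero_rpow hβ1'.ne'
    simp [h0]
  rcases le_or_gt |b| a with hba | hba
  · -- |b| ≤ a : a + b ≥ 0, use Bernoulli both ways
    have hab : 0 ≤ a + b := by
      rcases abs_le.mp hba with ⟨h1, _⟩; linarith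
    have hs : (-1:ℝ) ≤ b / a := by
      rw [neg_le, ← neg_div]
      have : -b ≤ a := by rcases abs_le.mp hba with ⟨h1, _⟩; linarith
      exact (div_le_one ha).mpr this
    have key : a + b = a * (1 + b / a) := by field_simp
    have habs : |a + b| = a + b := abs_of_nonneg hab
    -- lower bound : a^{β+1} + (β+1) a^β b ≤ (a+b)^{β+1}
    have hlow : a ^ (β + 1) + (β + 1) * a ^ β * b ≤ (a + b) ^ (β + 1) := by
      have hB := one_add_mul_self_le_rpow_one_add hs (by linarith : (1:ℝ) ≤ β + 1)
      have := mul_le_mul_of_nonneg_left hB (rpow_nonneg ha.le (β + 1))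
      calc a ^ (β + 1) + (β + 1) * a ^ β * b
          = a ^ (β + 1) * (1 + (β + 1) * (b / a)) := by
            rw [ha1]; field_simp
        _ ≤ a ^ (β + 1) * (1 + b / a) ^ (β + 1) := this
        _ = (a + b) ^ (β + 1) := by
            rw [key, Real.mul_rpow ha.le (by linarith : (0:ℝ) ≤ 1 + b / a)]
    -- upper bound
    have hup : (a + b) ^ (β + 1) ≤ a ^ (β + 1) + (β + 1) * a ^ β * b + β * (a ^ (β - 1) * b ^ 2) := by
      have hB := rpow_one_add_le_one_add_mul_self hs hβ0 hβ1.le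
      have hab' : (a + b) ^ β ≤ a ^ β + β * a ^ (β - 1) * b := by
        calc (a + b) ^ β = a ^ β * (1 + b / a) ^ β := by
              rw [key, Real.mul_rpow ha.le (by linarith : (0:ℝ) ≤ 1 + b / a)]
          _ ≤ a ^ β * (1 + β * (b / a)) :=
              mul_le_mul_of_nonneg_left hB (rpow_nonneg ha.le β)
          _ = a ^ β + β * a ^ (β - 1) * b := by
              rw [ha2]; field_simp
      calc (a + b) ^ (β + 1) = (a + b) ^ β * (a + b) := by
            rcases eq_or_lt_of_le hab with h | h
            · rw [← h]; simp [zero_rpow hβ1'.ne']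
            · rw [rpow_add_one h.ne']
        _ ≤ (a ^ β + β * a ^ (β - 1) * b) * (a + b) :=
            mul_le_mul_of_nonneg_right hab' hab
        _ = a ^ (β + 1) + (β + 1) * a ^ β * b + β * (a ^ (β - 1) * b ^ 2) := by
            rw [ha1, ha2]; ring
    have hE : |(|a + b|) ^ β * (a + b) - a ^ (β + 1) - (β + 1) * a ^ β * b|
        ≤ a ^ (β - 1) * b ^ 2 := by
      rw [habs]
      have heq : (a + b) ^ β * (a + b) = (a + b) ^ (β + 1) := by
        rcases eq_or_lt_of_le hab with h | h
        · rw [← h]; simp [zero_rpow hβ1'.ne']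
        · rw [rpow_add_one h.ne']
      rw [heq, abs_le]
      have hnn : 0 ≤ a ^ (β - 1) * b ^ 2 :=
        mul_nonneg (rpow_nonneg ha.le _) (sq_nonneg b)
      constructor
      · nlinarith
      · nlinarith
    -- min equals a^{β-1} b²
    have hbpos : 0 < |b| := abs_pos.mpr hb0
    have hmin : a ^ (β - 1) * b ^ 2 ≤ |b| ^ (β + 1) := by
      have h1 : a ^ (β - 1) ≤ |b| ^ (β - 1) :=
        Real.rpow_le_rpow_of_nonpos hbpos hba (by linarith)
      have h2 : |b| ^ (β + 1) = |b| ^ (β - 1) * b ^ 2 := by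
        have e1 : |b| ^ (β - 1) * |b| ^ (2:ℝ) = |b| ^ (β + 1) := by
          rw [← Real.rpow_add hbpos]; ring_nf
        rw [← e1, show |b| ^ (2:ℝ) = b ^ 2 by
          rw [show (2:ℝ) = ((2:ℕ):ℝ) by norm_num, Real.rpow_natCast, sq_abs]]
      rw [h2]
      exact mul_le_mul_of_nonneg_right h1 (sq_nonneg b)
    rw [min_eq_left hmin]
    nlinarith [mul_nonneg (rpow_nonneg ha.le (β-1)) (sq_nonneg b)]
  · -- a < |b| : crude bound, min = |b|^{β+1}
    have hbpos : 0 < |b| := lt_trans ha hba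
    have habs_eq : |(|a + b|) ^ β * (a + b)| = |a + b| ^ (β + 1) := by
      rw [abs_mul, abs_of_nonneg (rpow_nonneg (abs_nonneg (a+b)) β)]
      rcases eq_or_ne (a + b) 0 with h | h
      · simp [h, zero_rpow hβ1'.ne']
      · rw [rpow_add_one (abs_ne_zero.mpr h)]
    have h1 : |a + b| ^ (β + 1) ≤ 4 * |b| ^ (β + 1) := by
      have hle : |a + b| ≤ 2 * |b| := by
        calc |a + b| ≤ |a| + |b| := abs_add_le a b
          _ = a + |b| := by rw [abs_of_pos ha]
          _ ≤ 2 * |b| := by linarith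
      calc |a + b| ^ (β + 1) ≤ (2 * |b|) ^ (β + 1) :=
            Real.rpow_le_rpow (abs_nonneg _) hle hβ1'.le
        _ = 2 ^ (β + 1) * |b| ^ (β + 1) := Real.mul_rpow (by norm_num) (abs_nonneg _)
        _ ≤ 4 * |b| ^ (β + 1) := by
            have : (2:ℝ) ^ (β + 1) ≤ 2 ^ (2:ℝ) :=
              Real.rpow_le_rpow_of_exponent_le (by norm_num) (by linarith)
            have h4 : (2:ℝ) ^ (2:ℝ) = 4 := by
              rw [show (2:ℝ) = ((2:ℕ):ℝ) by norm_num, Real.rpow_natCast]; norm_num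
            nlinarith [rpow_nonneg (abs_nonneg b) (β + 1)]
    have h2 : a ^ (β + 1) ≤ |b| ^ (β + 1) :=
      Real.rpow_le_rpow ha.le hba.le hβ1'.le
    have h3 : (β + 1) * a ^ β * |b| ≤ 2 * |b| ^ (β + 1) := by
      have haβ : a ^ β ≤ |b| ^ β := Real.rpow_le_rpow ha.le hba.le hβ0
      have : a ^ β * |b| ≤ |b| ^ β * |b| :=
        mul_le_mul_of_nonneg_right haβ (abs_nonneg b)
      have hbb : |b| ^ β * |b| = |b| ^ (β + 1) := by
        rw [rpow_add_one hbpos.ne']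
      nlinarith [mul_nonneg (rpow_nonneg ha.le β) (abs_nonneg b)]
    have hmin : |b| ^ (β + 1) ≤ a ^ (β - 1) * b ^ 2 := by
      have ha' : a ^ (β - 1) ≥ |b| ^ (β - 1) :=
        Real.rpow_le_rpow_of_nonpos ha hba.le (by linarith)
      have h2' : |b| ^ (β + 1) = |b| ^ (β - 1) * b ^ 2 := by
        have : |b| ^ (β - 1) * |b| ^ (2:ℝ) = |b| ^ (β + 1) := by
          rw [← Real.rpow_add hbpos]; ring_nf
        rw [← this, show |b| ^ (2:ℝ) = b ^ 2 by
          rw [show (2:ℝ) = ((2:ℕ):ℝ) by norm_num, Real.rpow_natCast, sq_abs]]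
      rw [h2']
      exact mul_le_mul_of_nonneg_right ha' (sq_nonneg b)
    rw [min_eq_right hmin, abs_le]
    have hXb : |(|a + b|) ^ β * (a + b)| ≤ 4 * |b| ^ (β + 1) := by
      rw [habs_eq]; exact h1
    obtain ⟨hX1, hX2⟩ := abs_le.mp hXb
    have haβn : 0 ≤ a ^ β := rpow_nonneg ha.le β
    have hZ2 : (β + 1) * a ^ β * b ≤ 2 * |b| ^ (β + 1) := by
      calc (β + 1) * a ^ β * b ≤ (β + 1) * a ^ β * |b| :=
            mul_le_mul_of_nonneg_left (le_abs_self b) (mul_nonneg (by linarith) haβn)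
        _ ≤ 2 * |b| ^ (β + 1) := h3
    have hZ1 : -(2 * |b| ^ (β + 1)) ≤ (β + 1) * a ^ β * b := by
      have : (β + 1) * a ^ β * (-|b|) ≤ (β + 1) * a ^ β * b :=
        mul_le_mul_of_nonneg_left (neg_abs_le b) (mul_nonneg (by linarith) haβn)
      nlinarith
    have haβ1 : 0 ≤ a ^ (β + 1) := rpow_nonneg ha.le _
    constructor <;> nlinarith
end

section
/- The function G(n, μ) = (n/(n+1))^μ · (n + 1 − μ/2) / (n + 1 − μ/4)² is strictly decreasing in μ on the interval (0, 4] for every integer n ≥ 2. -/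
theorem stmt_8 (n : ℕ) (hn : 2 ≤ n) :
    StrictAntiOn
      (fun μ : ℝ => ((n : ℝ) / (n + 1)) ^ μ * ((n : ℝ) + 1 - μ / 2) / ((n : ℝ) + 1 - μ / 4) ^ 2)
      (Set.Ioc 0 4) := by
  have hn2 : (2 : ℝ) ≤ (n : ℝ) := by exact_mod_cast hn
  set a : ℝ := (n : ℝ) / (n + 1) with ha_def
  have ha0 : 0 < a := by apply div_pos <;> linarith
  have ha1 : a < 1 := by rw [div_lt_one (by linarith)]; linarith
  have hL : Real.log a < 0 := Real.log_neg ha0 ha1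
  have hd : ∀ x : ℝ, x ≤ 4 →
      HasDerivAt (fun μ : ℝ => a ^ μ * ((n : ℝ) + 1 - μ / 2) / ((n : ℝ) + 1 - μ / 4) ^ 2)
        (((a ^ x * Real.log a * ((n : ℝ) + 1 - x / 2) + a ^ x * (-(1 / 2))) *
              ((n : ℝ) + 1 - x / 4) ^ 2 -
            a ^ x * ((n : ℝ) + 1 - x / 2) *
              ((2 : ℕ) * ((n : ℝ) + 1 - x / 4) ^ 1 * (-(1 / 4)))) /
          (((n : ℝ) + 1 - x / 4) ^ 2) ^ 2) x := by
    intro x hx4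
    have hv : 0 < (n : ℝ) + 1 - x / 4 := by linarith
    have h1 : HasDerivAt (fun μ : ℝ => a ^ μ) (a ^ x * Real.log a) x :=
      (Real.hasStrictDerivAt_const_rpow ha0 x).hasDerivAt
    have h2 : HasDerivAt (fun μ : ℝ => (n : ℝ) + 1 - μ / 2) (-(1 / 2)) x := by
      simpa using (HasDerivAt.const_sub ((n : ℝ) + 1) ((hasDerivAt_id x).div_const 2))
    have h3 : HasDerivAt (fun μ : ℝ => ((n : ℝ) + 1 - μ / 4) ^ 2)
        ((2 : ℕ) * ((n : ℝ) + 1 - x / 4) ^ 1 * (-(1 / 4))) x := by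
      have h3' : HasDerivAt (fun μ : ℝ => (n : ℝ) + 1 - μ / 4) (-(1 / 4)) x := by
        simpa using (HasDerivAt.const_sub ((n : ℝ) + 1) ((hasDerivAt_id x).div_const 4))
      exact h3'.pow 2
    exact (h1.mul h2).div h3 (by positivity)
  apply strictAntiOn_of_deriv_neg (convex_Ioc 0 4)
  · intro x hx
    exact ((hd x hx.2).continuousAt).continuousWithinAt
  · intro x hx
    rw [interior_Ioc] at hx
    obtain ⟨hx1, hx2⟩ := hx
    have hv : 0 < (n : ℝ) + 1 - x / 4 := by linarith
    have hu : 0 < (n : ℝ) + 1 - x / 2 := by linarith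
    have hP : 0 < a ^ x := Real.rpow_pos_of_pos ha0 x
    rw [(hd x hx2.le).deriv]
    apply div_neg_of_neg_of_pos _ (by positivity)
    have hkey : a ^ x * ((n : ℝ) + 1 - x / 4) *
        (Real.log a * (((n : ℝ) + 1 - x / 2) * ((n : ℝ) + 1 - x / 4)) - x / 8) < 0 := by
      apply mul_neg_of_pos_of_neg (mul_pos hP hv)
      have := mul_neg_of_neg_of_pos hL (mul_pos hu hv)
      linarith
    nlinarith [hkey]
end

section
/- For every integer n ≥ 2 and every μ ∈ (0, 4], π (n−1) ((n+1)/n)^{2n} > 1; consequently, with F(n, μ) = π^{n+1} n^{2n+2−μ} 2^{2−μ/2} Γ(n+1−μ/2) / Γ(n+1−μ/4)², the ratio F(n+1, μ)/F(n, μ) is greater than 1 for all n ≥ 2 and μ ∈ (0, 4], so F(·, μ) is strictly increasing on integers n ≥ 2. -/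
/-- `F(n, μ) = π^{n+1} n^{2n+2−μ} 2^{2−μ/2} Γ(n+1−μ/2) / Γ(n+1−μ/4)²`. -/
noncomputable def Fconst (n : ℕ) (μ : ℝ) : ℝ :=
  Real.pi ^ (n + 1) * (n : ℝ) ^ (2 * (n : ℝ) + 2 - μ) * (2 : ℝ) ^ (2 - μ / 2) *
    Real.Gamma ((n : ℝ) + 1 - μ / 2) / Real.Gamma ((n : ℝ) + 1 - μ / 4) ^ 2

lemma Fconst_pos (μ : ℝ) (hμ0 : 0 < μ) (hμ4 : μ ≤ 4) (n : ℕ) (hn : 2 ≤ n) :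
    0 < Fconst n μ := by
  have hn2 : (2:ℝ) ≤ n := by exact_mod_cast hn
  have hB : (0:ℝ) < n := by linarith
  have h2 : (0:ℝ) < (n:ℝ) + 1 - μ / 2 := by linarith
  have h4 : (0:ℝ) < (n:ℝ) + 1 - μ / 4 := by linarith
  have hg2 := Real.Gamma_pos_of_pos h2
  have hg4 := Real.Gamma_pos_of_pos h4
  unfold Fconst
  positivity

lemma Fconst_step (μ : ℝ) (hμ0 : 0 < μ) (hμ4 : μ ≤ 4) (n : ℕ) (hn : 2 ≤ n) :
    Fconst n μ < Fconst (n + 1) μ := by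
  have hn2 : (2:ℝ) ≤ n := by exact_mod_cast hn
  have hB : (0:ℝ) < n := by linarith
  have hA : (0:ℝ) < (n:ℝ) + 1 := by linarith
  have h2 : (0:ℝ) < (n:ℝ) + 1 - μ / 2 := by linarith
  have h4 : (0:ℝ) < (n:ℝ) + 1 - μ / 4 := by linarith
  have hg2 := Real.Gamma_pos_of_pos h2
  have hg4 := Real.Gamma_pos_of_pos h4
  -- Gamma recursions
  have hG2 : Real.Gamma ((n:ℝ) + 1 + 1 - μ / 2)
      = ((n:ℝ) + 1 - μ / 2) * Real.Gamma ((n:ℝ) + 1 - μ / 2) := by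
    rw [show (n:ℝ) + 1 + 1 - μ / 2 = ((n:ℝ) + 1 - μ / 2) + 1 by ring,
      Real.Gamma_add_one h2.ne']
  have hG4 : Real.Gamma ((n:ℝ) + 1 + 1 - μ / 4)
      = ((n:ℝ) + 1 - μ / 4) * Real.Gamma ((n:ℝ) + 1 - μ / 4) := by
    rw [show (n:ℝ) + 1 + 1 - μ / 4 = ((n:ℝ) + 1 - μ / 4) + 1 by ring,
      Real.Gamma_add_one h4.ne']
  -- key inequality
  have he : (0:ℝ) ≤ 2 * (n:ℝ) + 2 - μ := by linarith
  have h1 : (n:ℝ) ^ (2 * (n:ℝ) + 2 - μ) ≤ ((n:ℝ) + 1) ^ (2 * (n:ℝ) + 2 - μ) :=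
    Real.rpow_le_rpow hB.le (by linarith) he
  have hsplit : ((n:ℝ) + 1) ^ (2 * ((n:ℝ) + 1) + 2 - μ)
      = ((n:ℝ) + 1) ^ (2 * (n:ℝ) + 2 - μ) * ((n:ℝ) + 1) ^ 2 := by
    rw [show 2 * ((n:ℝ) + 1) + 2 - μ = (2 * (n:ℝ) + 2 - μ) + 2 by ring,
      Real.rpow_add hA, Real.rpow_two, sq]
  have hX : (0:ℝ) < ((n:ℝ) + 1) ^ (2 * (n:ℝ) + 2 - μ) := Real.rpow_pos_of_pos hA _
  have hpi := Real.pi_gt_three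
  have hfac : 1 < Real.pi * ((n:ℝ) + 1) ^ 2 * ((n:ℝ) + 1 - μ / 2) / ((n:ℝ) + 1 - μ / 4) ^ 2 := by
    rw [lt_div_iff₀ (by positivity)]
    have hle : ((n:ℝ) + 1 - μ / 4) ^ 2 ≤ ((n:ℝ) + 1) ^ 2 :=
      pow_le_pow_left₀ h4.le (by linarith) 2
    have h2ge : 1 ≤ (n:ℝ) + 1 - μ / 2 := by linarith
    nlinarith [hle, h2ge, hpi, sq_nonneg ((n:ℝ) + 1),
      mul_le_mul_of_nonneg_left h2ge (sq_nonneg ((n:ℝ) + 1))]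
  have key : (n:ℝ) ^ (2 * (n:ℝ) + 2 - μ)
      < Real.pi * ((n:ℝ) + 1) ^ (2 * ((n:ℝ) + 1) + 2 - μ) * ((n:ℝ) + 1 - μ / 2)
        / ((n:ℝ) + 1 - μ / 4) ^ 2 := by
    calc (n:ℝ) ^ (2 * (n:ℝ) + 2 - μ) ≤ ((n:ℝ) + 1) ^ (2 * (n:ℝ) + 2 - μ) := h1
    _ = ((n:ℝ) + 1) ^ (2 * (n:ℝ) + 2 - μ) * 1 := by ring
    _ < ((n:ℝ) + 1) ^ (2 * (n:ℝ) + 2 - μ)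
        * (Real.pi * ((n:ℝ) + 1) ^ 2 * ((n:ℝ) + 1 - μ / 2) / ((n:ℝ) + 1 - μ / 4) ^ 2) :=
      (mul_lt_mul_iff_right₀ hX).2 hfac
    _ = Real.pi * (((n:ℝ) + 1) ^ (2 * (n:ℝ) + 2 - μ) * ((n:ℝ) + 1) ^ 2) * ((n:ℝ) + 1 - μ / 2)
        / ((n:ℝ) + 1 - μ / 4) ^ 2 := by ring
    _ = _ := by rw [hsplit]
  -- rewrite both sides
  have hEq1 : Fconst n μ
      = (Real.pi ^ (n + 1) * (2:ℝ) ^ (2 - μ / 2) * Real.Gamma ((n:ℝ) + 1 - μ / 2)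
          / Real.Gamma ((n:ℝ) + 1 - μ / 4) ^ 2) * ((n:ℝ) ^ (2 * (n:ℝ) + 2 - μ)) := by
    unfold Fconst; ring
  have hEq2 : Fconst (n + 1) μ
      = (Real.pi ^ (n + 1) * (2:ℝ) ^ (2 - μ / 2) * Real.Gamma ((n:ℝ) + 1 - μ / 2)
          / Real.Gamma ((n:ℝ) + 1 - μ / 4) ^ 2)
        * (Real.pi * ((n:ℝ) + 1) ^ (2 * ((n:ℝ) + 1) + 2 - μ) * ((n:ℝ) + 1 - μ / 2)
            / ((n:ℝ) + 1 - μ / 4) ^ 2) := by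
    unfold Fconst
    push_cast
    rw [hG2, hG4]
    field_simp
    ring
  rw [hEq1, hEq2]
  have hK : 0 < Real.pi ^ (n + 1) * (2:ℝ) ^ (2 - μ / 2) * Real.Gamma ((n:ℝ) + 1 - μ / 2)
      / Real.Gamma ((n:ℝ) + 1 - μ / 4) ^ 2 := by positivity
  exact mul_lt_mul_of_pos_left key hK

theorem stmt_9 (μ : ℝ) (hμ0 : 0 < μ) (hμ4 : μ ≤ 4) :
    (∀ n : ℕ, 2 ≤ n → 1 < Real.pi * ((n : ℝ) - 1) * (((n : ℝ) + 1) / n) ^ (2 * n)) ∧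
    (∀ n : ℕ, 2 ≤ n → 1 < Fconst (n + 1) μ / Fconst n μ) ∧
    (∀ m k : ℕ, 2 ≤ m → m < k → Fconst m μ < Fconst k μ) := by
  refine ⟨?_, ?_, ?_⟩
  · intro n hn
    have hn2 : (2:ℝ) ≤ n := by exact_mod_cast hn
    have hB : (0:ℝ) < n := by linarith
    have hb : 1 ≤ ((n:ℝ) + 1) / n := by rw [le_div_iff₀ hB]; linarith
    have hp : 1 ≤ (((n:ℝ) + 1) / n) ^ (2 * n) := one_le_pow₀ hb
    have hpi := Real.pi_gt_three
    have h1 : Real.pi ≤ Real.pi * ((n:ℝ) - 1) :=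
      le_mul_of_one_le_right (by positivity) (by linarith)
    have h2 : Real.pi * ((n:ℝ) - 1) ≤ Real.pi * ((n:ℝ) - 1) * (((n:ℝ) + 1) / n) ^ (2 * n) :=
      le_mul_of_one_le_right (by nlinarith) hp
    linarith
  · intro n hn
    rw [lt_div_iff₀ (Fconst_pos μ hμ0 hμ4 n hn)]
    rw [one_mul]
    exact Fconst_step μ hμ0 hμ4 n hn
  · intro m k hm hmk
    induction k with
    | zero => omega
    | succ k ih =>
      rcases Nat.lt_succ_iff_lt_or_eq.mp hmk with h | h
      · exact (ih h).trans (Fconst_step μ hμ0 hμ4 k (by omega))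
      · subst h; exact Fconst_step μ hμ0 hμ4 m hm
end
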